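/- For every d×d orthogonal matrix O and every δ > 0, there exists a d×d orthogonal matrix R with rational entries such that max_{i,j} |O_{ij} − R_{ij}| < δ, and each entry of R has denominator bounded by a constant depending only on d and δ. -/

import Mathlib

/-!
The Cayley transform `A ↦ (1 - A) (1 + A)⁻¹` sends skew-symmetric matrices to orthogonal ones,
commutes with field embeddings such as `ℚ → ℝ`, is continuous wherever `1 + A` is invertible,
and is its own inverse on orthogonal matrices `O` with `det (1 + O) ≠ 0`. Approximating the
skew-symmetric matrix `cayley O` by rational skew-symmetric ones therefore approximates `O` by
rational orthogonal matrices. Every orthogonal `O` is brought into this domain by a diagonal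
sign matrix `D`: the determinant `det (D + O)` is affine in each sign, so some choice of signs
keeps it nonzero. Hence rational orthogonal matrices are dense in the compact orthogonal group,
a finite set of them is a `δ`-net, and `K` is the largest denominator occurring in that net.
-/

open Matrix

namespace Matrix

theorem dotProduct_mulVec_self_of_transpose_eq_neg {n R : Type*} [Fintype n] [CommRing R]
    [LinearOrder R] [IsStrictOrderedRing R] {A : Matrix n n R} (hA : Aᵀ = -A) (v : n → R) :
    v ⬝ᵥ A *ᵥ v = 0 := by
  have h : v ⬝ᵥ A *ᵥ v = (Aᵀ *ᵥ v) ⬝ᵥ v := by rw [mulVec_transpose, dotProduct_mulVec]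
  rw [hA, neg_mulVec, neg_dotProduct, dotProduct_comm] at h
  rw [dotProduct_comm]
  linarith

theorem det_diagonal_cons_add {R : Type*} [CommRing R] {k : ℕ}
    (M : Matrix (Fin (k + 1)) (Fin (k + 1)) R) (x : R) (e : Fin k → R) :
    (diagonal (Fin.cons x e) + M).det =
      (diagonal (Fin.cons 0 e) + M).det + x * (diagonal e + M.submatrix Fin.succ Fin.succ).det := by
  have hminor : ∀ y (j : Fin (k + 1)),
      (diagonal (Fin.cons y e) + M).submatrix Fin.succ j.succAbove =
        (diagonal (Fin.cons 0 e) + M).submatrix Fin.succ j.succAbove := by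
    intro y j; ext a b; simp [diagonal_apply]
  have hminor0 : (diagonal (Fin.cons 0 e) + M).submatrix Fin.succ (Fin.succAbove 0) =
      diagonal e + M.submatrix Fin.succ Fin.succ := by
    ext a b; simp [diagonal_apply]
  simp only [det_succ_row_zero, Fin.sum_univ_succ, hminor x, hminor0]
  simp [eq_comm (a := (0 : Fin (k + 1)))]
  ring

theorem exists_det_diagonal_units_add_ne_zero_fin {R : Type*} [CommRing R] [NoZeroDivisors R]
    [NeZero (2 : R)] (k : ℕ) (M : Matrix (Fin k) (Fin k) R) :
    ∃ s : Fin k → ℤˣ, (diagonal (fun i => ((s i : ℤ) : R)) + M).det ≠ 0 := by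
  induction k with
  | zero =>
    have : Nontrivial R := nontrivial_of_ne 2 0 two_ne_zero
    exact ⟨finZeroElim, by simp⟩
  | succ k ih =>
    obtain ⟨s, hs⟩ := ih (M.submatrix Fin.succ Fin.succ)
    have hcons : ∀ u : ℤˣ,
        (fun i : Fin (k + 1) => (((Fin.cons u s : Fin (k + 1) → ℤˣ) i : ℤ) : R)) =
          Fin.cons ((u : ℤ) : R) fun i => ((s i : ℤ) : R) := by
      intro u; ext i; refine Fin.cases ?_ (fun i => ?_) i <;> simp
    -- the determinant is affine in the first sign with nonzero slope, so `±1` cannot both kill it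
    by_contra! hall
    have h1 := hall (Fin.cons 1 s)
    have h2 := hall (Fin.cons (-1) s)
    rw [hcons, det_diagonal_cons_add] at h1 h2
    have htwice : (2 : R) *
        (diagonal (fun i => ((s i : ℤ) : R)) + M.submatrix Fin.succ Fin.succ).det = 0 := by
      push_cast at h1 h2
      linear_combination h1 - h2
    exact hs ((mul_eq_zero.mp htwice).resolve_left two_ne_zero)

variable {n : Type*} [Fintype n] [DecidableEq n]

theorem exists_det_diagonal_units_add_ne_zero {R : Type*} [CommRing R] [NoZeroDivisors R]
    [NeZero (2 : R)] (M : Matrix n n R) :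
    ∃ s : n → ℤˣ, (diagonal (fun i => ((s i : ℤ) : R)) + M).det ≠ 0 := by
  let e := Fintype.equivFin n
  obtain ⟨s, hs⟩ := exists_det_diagonal_units_add_ne_zero_fin _ (reindex e e M)
  have hreindex : diagonal (fun i => ((s i : ℤ) : R)) + reindex e e M =
      reindex e e (diagonal (fun i => ((s (e i) : ℤ) : R)) + M) := by
    ext i j; simp [diagonal_apply]
  exact ⟨s ∘ e, by rwa [hreindex, det_reindex_self] at hs⟩

theorem det_one_add_ne_zero_of_transpose_eq_neg {R : Type*} [CommRing R] [LinearOrder R]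
    [IsStrictOrderedRing R] {A : Matrix n n R} (hA : Aᵀ = -A) : (1 + A).det ≠ 0 := by
  intro hdet
  obtain ⟨v, hv, hAv⟩ := exists_mulVec_eq_zero_iff.mpr hdet
  have : v ⬝ᵥ v = 0 := by
    simpa [add_mulVec, dotProduct_add, dotProduct_mulVec_self_of_transpose_eq_neg hA]
      using congrArg (v ⬝ᵥ ·) hAv
  exact hv (dotProduct_self_eq_zero.mp this)

theorem diagonal_units_mem_orthogonalGroup {R : Type*} [CommRing R] (s : n → ℤˣ) :
    diagonal (fun i => ((s i : ℤ) : R)) ∈ orthogonalGroup n R := by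
  rw [mem_orthogonalGroup_iff', diagonal_transpose, diagonal_mul_diagonal]
  simp [← Int.cast_mul, ← Units.val_mul, Int.units_mul_self]

theorem abs_apply_le_one_of_mem_orthogonalGroup {R : Type*} [CommRing R] [LinearOrder R]
    [IsStrictOrderedRing R] {O : Matrix n n R} (hO : O ∈ orthogonalGroup n R) (i j : n) :
    |O i j| ≤ 1 := by
  have hcol : ∑ k, O k j * O k j = 1 := by
    simpa [mul_apply] using congrFun (congrFun ((mem_orthogonalGroup_iff' n R).mp hO) j) j
  rw [abs_le_one_iff_mul_self_le_one, ← hcol]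
  exact Finset.single_le_sum (fun k _ => mul_self_nonneg (O k j)) (Finset.mem_univ i)

theorem _root_.RingHom.mapMatrix_mem_orthogonalGroup {R S : Type*} [CommRing R] [CommRing S]
    (f : R →+* S) {Q : Matrix n n R} (hQ : Q ∈ orthogonalGroup n R) :
    f.mapMatrix Q ∈ orthogonalGroup n S := by
  rw [mem_orthogonalGroup_iff'] at hQ ⊢
  simpa [transpose_map] using congrArg f.mapMatrix hQ

section Cayley

variable {K : Type*} [Field K]

noncomputable def cayley (A : Matrix n n K) : Matrix n n K := (1 - A) * (1 + A)⁻¹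

theorem cayley_mul_one_add {A : Matrix n n K} (h : IsUnit (1 + A).det) :
    cayley A * (1 + A) = 1 - A := by
  rw [cayley, mul_assoc, nonsing_inv_mul _ h, mul_one]

theorem one_add_mul_cayley {A : Matrix n n K} (h : IsUnit (1 + A).det) :
    (1 + A) * cayley A = 1 - A := by
  have hcomm : (1 + A) * (1 - A) = (1 - A) * (1 + A) := by noncomm_ring
  rw [cayley, ← mul_assoc, hcomm, mul_assoc, mul_nonsing_inv _ h, mul_one]

theorem cayley_transpose_mul_self [LinearOrder K] [IsStrictOrderedRing K] {A : Matrix n n K}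
    (hA : Aᵀ = -A) : (cayley A)ᵀ * cayley A = 1 := by
  have hplus := isUnit_iff_ne_zero.mpr (det_one_add_ne_zero_of_transpose_eq_neg hA)
  have hminus : IsUnit (1 - A).det := by
    have hA' : (-A)ᵀ = -(-A) := by rw [transpose_neg, hA]
    simpa [sub_eq_add_neg] using
      isUnit_iff_ne_zero.mpr (det_one_add_ne_zero_of_transpose_eq_neg hA')
  have hT : (cayley A)ᵀ = (1 - A)⁻¹ * (1 + A) := by
    rw [cayley, transpose_mul, transpose_nonsing_inv, transpose_add, transpose_sub, transpose_one,
      hA, sub_neg_eq_add, ← sub_eq_add_neg]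
  rw [hT, mul_assoc, one_add_mul_cayley hplus, nonsing_inv_mul _ hminus]

theorem transpose_cayley_of_transpose_mul_self {O : Matrix n n K} (hO : Oᵀ * O = 1)
    (h : IsUnit (1 + O).det) : (cayley O)ᵀ = -cayley O := by
  have hO' : O * Oᵀ = 1 := mul_eq_one_comm.mp hO
  have hT : (1 + Oᵀ) * (cayley O)ᵀ = 1 - Oᵀ := by
    simpa using congrArg transpose (cayley_mul_one_add h)
  apply (isUnit_iff_isUnit_det _ |>.mpr h).mul_left_cancel
  calc (1 + O) * (cayley O)ᵀ = O * ((1 + Oᵀ) * (cayley O)ᵀ) := by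
        rw [← mul_assoc, mul_add, hO', mul_one, add_comm]
    _ = (1 + O) * -cayley O := by
        rw [hT, mul_neg, one_add_mul_cayley h, mul_sub, hO']; noncomm_ring

theorem cayley_cayley [NeZero (2 : K)] {O : Matrix n n K} (h : IsUnit (1 + O).det) :
    cayley (cayley O) = O := by
  -- `(1 + cayley O) (1 + O) = 2` and `(1 - cayley O) (1 + O) = 2 O`
  have hplus : (1 + cayley O) * ((1 + O) * (2⁻¹ : K) • 1) = 1 := by
    rw [← mul_assoc, add_mul, cayley_mul_one_add h, mul_smul_comm, mul_one, one_mul,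
      add_add_sub_cancel, ← two_smul K, smul_smul, inv_mul_cancel₀ two_ne_zero, one_smul]
  rw [cayley, inv_eq_right_inv hplus, ← mul_assoc, sub_mul, cayley_mul_one_add h, one_mul,
    add_sub_sub_cancel, ← two_smul K, smul_mul_smul, mul_one, mul_inv_cancel₀ two_ne_zero,
    one_smul]

theorem _root_.RingHom.mapMatrix_nonsing_inv {L : Type*} [Field L] (f : K →+* L)
    (A : Matrix n n K) : f.mapMatrix A⁻¹ = (f.mapMatrix A)⁻¹ := by
  rw [inv_def, inv_def, Ring.inverse_eq_inv', Ring.inverse_eq_inv', ← RingHom.map_det,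
    ← RingHom.map_adjugate, ← map_inv₀ f]
  ext i j
  simp

theorem _root_.RingHom.mapMatrix_cayley {L : Type*} [Field L] (f : K →+* L) (A : Matrix n n K) :
    f.mapMatrix (cayley A) = cayley (f.mapMatrix A) := by
  rw [cayley, cayley, map_mul, RingHom.mapMatrix_nonsing_inv, map_sub, map_add, map_one]

theorem continuousAt_cayley [TopologicalSpace K] [IsTopologicalDivisionRing K]
    {A : Matrix n n K} (h : (1 + A).det ≠ 0) : ContinuousAt cayley A := by
  have hinv : ContinuousAt Inv.inv (1 + A) :=
    continuousAt_matrix_inv _ (by rw [Ring.inverse_eq_inv']; exact continuousAt_inv₀ h)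
  exact (continuous_const.sub continuous_id).continuousAt.mul
    (hinv.comp (continuous_const.add continuous_id).continuousAt)

end Cayley

theorem isCompact_orthogonalGroup : IsCompact (orthogonalGroup n ℝ : Set (Matrix n n ℝ)) := by
  have hclosed : IsClosed (orthogonalGroup n ℝ : Set (Matrix n n ℝ)) := by
    have : (orthogonalGroup n ℝ : Set (Matrix n n ℝ)) = {O | Oᵀ * O = 1} :=
      Set.ext fun O => mem_orthogonalGroup_iff' n ℝ
    rw [this]
    exact isClosed_eq (continuous_id.matrix_transpose.matrix_mul continuous_id) continuous_const
  refine (isCompact_univ_pi fun _ => isCompact_univ_pi fun _ => isCompact_Icc).of_isClosed_subset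
    hclosed fun O hO i _ j _ => abs_le.mp (abs_apply_le_one_of_mem_orthogonalGroup hO i j)

theorem denseRange_mapMatrix_ratCast :
    DenseRange ((Rat.castHom ℝ).mapMatrix : Matrix n n ℚ → Matrix n n ℝ) :=
  DenseRange.piMap (Y := fun _ : n => n → ℝ) fun _ =>
    DenseRange.piMap (Y := fun _ : n => ℝ) fun _ => Rat.denseRange_cast (𝕜 := ℝ)

noncomputable def rationalOrthogonalGroup (n : Type*) [Fintype n] [DecidableEq n] :
    Submonoid (Matrix n n ℝ) :=
  (orthogonalGroup n ℚ).map (Rat.castHom ℝ).mapMatrix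

theorem mem_closure_rationalOrthogonalGroup_of_det_one_add_ne_zero {O : Matrix n n ℝ}
    (hO : O ∈ orthogonalGroup n ℝ) (h : (1 + O).det ≠ 0) :
    O ∈ closure (rationalOrthogonalGroup n : Set (Matrix n n ℝ)) := by
  set A := cayley O
  have hA : Aᵀ = -A :=
    transpose_cayley_of_transpose_mul_self ((mem_orthogonalGroup_iff' n ℝ).mp hO) h.isUnit
  -- every skew-symmetric matrix is `X - Xᵀ`, and `X` can be taken rational
  let skewCayley : Matrix n n ℝ → Matrix n n ℝ := fun X => cayley (X - Xᵀ)
  have hhalf : (2⁻¹ : ℝ) • A - ((2⁻¹ : ℝ) • A)ᵀ = A := by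
    rw [transpose_smul, hA, smul_neg, sub_neg_eq_add, ← add_smul]; norm_num
  have hcont : ContinuousAt skewCayley ((2⁻¹ : ℝ) • A) := by
    have hcayley : ContinuousAt cayley ((2⁻¹ : ℝ) • A - ((2⁻¹ : ℝ) • A)ᵀ) := by
      rw [hhalf]
      exact continuousAt_cayley (det_one_add_ne_zero_of_transpose_eq_neg hA)
    exact hcayley.comp (f := fun X : Matrix n n ℝ => X - Xᵀ) (by fun_prop)
  have hmaps :
      skewCayley '' Set.range (Rat.castHom ℝ).mapMatrix ⊆ rationalOrthogonalGroup n := by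
    rintro _ ⟨_, ⟨Q, rfl⟩, rfl⟩
    refine ⟨cayley (Q - Qᵀ), (mem_orthogonalGroup_iff' n ℚ).mpr
      (cayley_transpose_mul_self (by rw [transpose_sub, transpose_transpose, neg_sub])), ?_⟩
    rw [RingHom.mapMatrix_cayley, map_sub]
    rfl
  have := mem_closure_image hcont (denseRange_mapMatrix_ratCast ((2⁻¹ : ℝ) • A))
  rw [show skewCayley ((2⁻¹ : ℝ) • A) = O from (congrArg cayley hhalf).trans
    (cayley_cayley h.isUnit)] at this
  exact closure_mono hmaps this

theorem orthogonalGroup_subset_closure_rationalOrthogonalGroup :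
    (orthogonalGroup n ℝ : Set (Matrix n n ℝ)) ⊆ closure (rationalOrthogonalGroup n) := by
  intro O hO
  obtain ⟨s, hs⟩ := exists_det_diagonal_units_add_ne_zero O
  set D : Matrix n n ℝ := diagonal fun i => ((s i : ℤ) : ℝ)
  have hDq := diagonal_units_mem_orthogonalGroup (R := ℚ) s
  have hD : (Rat.castHom ℝ).mapMatrix (diagonal fun i => ((s i : ℤ) : ℚ)) = D := by
    rw [RingHom.mapMatrix_apply, diagonal_map (map_zero _)]
    simp [D]
  have hDD : D * D = 1 := by
    simpa [D] using (mem_orthogonalGroup_iff' n ℝ).mp (diagonal_units_mem_orthogonalGroup s)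
  have hdet : (1 + D * O).det ≠ 0 := by
    rw [show 1 + D * O = D * (D + O) by rw [mul_add, hDD], det_mul]
    exact mul_ne_zero (left_ne_zero_of_mul_eq_one (by rw [← det_mul, hDD, det_one])) hs
  have hmaps : Set.MapsTo (D * ·) (rationalOrthogonalGroup n) (rationalOrthogonalGroup n) := by
    rintro _ ⟨Q, hQ, rfl⟩
    exact ⟨_, mul_mem hDq hQ, by rw [map_mul, hD]⟩
  have := map_mem_closure (by fun_prop : Continuous (D * ·))
    (mem_closure_rationalOrthogonalGroup_of_det_one_add_ne_zero
      (mul_mem (diagonal_units_mem_orthogonalGroup s) hO) hdet) hmaps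
  rwa [← mul_assoc, hDD, one_mul] at this

section ApproximationNet

attribute [local instance] Matrix.normedAddCommGroup

theorem exists_finset_orthogonalGroup_approx {δ : ℝ} (hδ : 0 < δ) :
    ∃ t : Finset (Matrix n n ℚ), ∀ O ∈ orthogonalGroup n ℝ, ∃ Q ∈ t,
      Q ∈ orthogonalGroup n ℚ ∧ ∀ i j, |O i j - Q i j| < δ := by
  obtain ⟨b, hb, hfin, hcover⟩ := isCompact_orthogonalGroup.elim_finite_subcover_image
    (b := (orthogonalGroup n ℚ : Set (Matrix n n ℚ)))
    (c := fun Q => Metric.ball ((Rat.castHom ℝ).mapMatrix Q) δ)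
    (fun _ _ => Metric.isOpen_ball) fun O hO => by
      obtain ⟨_, ⟨Q, hQ, rfl⟩, hOQ⟩ := Metric.mem_closure_iff.mp
        (orthogonalGroup_subset_closure_rationalOrthogonalGroup hO) δ hδ
      exact Set.mem_iUnion₂.mpr ⟨Q, hQ, hOQ⟩
  refine ⟨hfin.toFinset, fun O hO => ?_⟩
  obtain ⟨Q, hQ, hOQ⟩ := Set.mem_iUnion₂.mp (hcover hO)
  refine ⟨Q, hfin.mem_toFinset.mpr hQ, hb hQ, fun i j => ?_⟩
  have := (dist_pi_lt_iff hδ).mp ((dist_pi_lt_iff hδ).mp (Metric.mem_ball.mp hOQ) i) j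
  rwa [Real.dist_eq] at this

end ApproximationNet

end Matrix

/-- Rational approximation of orthogonal matrices (Schmutz): for every `δ > 0` there is a
bound `K = K(d, δ)` such that every `d×d` orthogonal matrix `O` admits an orthogonal matrix
`R` with rational entries, entrywise `δ`-close to `O`, whose entries have denominators at
most `K`. -/
theorem stmt_8 (d : ℕ) (δ : ℝ) (hδ : 0 < δ) :
    ∃ K : ℕ, ∀ O : Matrix (Fin d) (Fin d) ℝ, Oᵀ * O = 1 →
      ∃ R : Matrix (Fin d) (Fin d) ℝ, Rᵀ * R = 1 ∧
        (∀ i j, |O i j - R i j| < δ) ∧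
        (∀ i j, ∃ q : ℚ, R i j = (q : ℝ) ∧ q.den ≤ K) := by
  obtain ⟨t, ht⟩ := exists_finset_orthogonalGroup_approx (n := Fin d) hδ
  refine ⟨t.sup fun Q => Finset.univ.sup fun p : Fin d × Fin d => (Q p.1 p.2).den,
    fun O hO => ?_⟩
  obtain ⟨Q, hQt, hQ, hOQ⟩ := ht O ((mem_orthogonalGroup_iff' _ _).mpr hO)
  refine ⟨(Rat.castHom ℝ).mapMatrix Q,
    (mem_orthogonalGroup_iff' _ _).mp ((Rat.castHom ℝ).mapMatrix_mem_orthogonalGroup hQ), hOQ,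
    fun i j => ⟨Q i j, rfl, ?_⟩⟩
  exact Finset.le_sup_of_le hQt
    (Finset.le_sup (f := fun p : Fin d × Fin d => (Q p.1 p.2).den) (Finset.mem_univ (i, j)))
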